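/- Suppose n > 0, θ1, ..., θb are integers with gcd(θ1,...,θb, n) = 1 and θ1 + ... + θb ≡ 0 (mod n). Let t_i = gcd(θ_i, n), q_i = n/t_i, u_i = θ_i/t_i. Then for each index i, q_i divides lcm of {q_1, ..., q_b} \ {q_i}, and hence lcm(q_1, ..., q_{i-1}, q_{i+1}, ..., q_b) = n. -/

import Mathlib

/-- Corollary "m": if `gcd(θ₁, …, θ_b, n) = 1` and `n ∣ θ₁ + ⋯ + θ_b`, with
`q_i = n / gcd(θ_i, n)`, then for each `i` the lcm of the `q_j` for `j ≠ i`
equals `n`. -/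
theorem stmt_5 (n : ℕ) (hn : 0 < n) (b : ℕ) (θ : Fin b → ℤ)
    (hgcd : Nat.gcd (Finset.univ.gcd fun i => (θ i).gcd n) n = 1)
    (hsum : (n : ℤ) ∣ ∑ i, θ i) :
    ∀ i : Fin b, (Finset.univ.erase i).lcm (fun j => n / (θ j).gcd n) = n := by
  intro i
  have htdvd : ∀ j : Fin b, (θ j).gcd n ∣ n := by
    intro j
    have := Int.gcd_dvd_right (a := θ j) (b := (n : ℤ))
    exact_mod_cast this
  -- each q_j divides n
  have hLdvd : (Finset.univ.erase i).lcm (fun j => n / (θ j).gcd n) ∣ n := by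
    apply Finset.lcm_dvd
    intro j _
    exact Nat.div_dvd_of_dvd (htdvd j)
  -- n divides the lcm
  have hdvdL : n ∣ (Finset.univ.erase i).lcm (fun j => n / (θ j).gcd n) := by
    rw [Nat.dvd_iff_prime_pow_dvd_dvd]
    intro p k hp hpk
    rcases Nat.eq_zero_or_pos k with rfl | hk
    · simp
    have hpn : p ∣ n := dvd_trans (dvd_pow_self p hk.ne') hpk
    have hp' : p.Prime := hp
    -- there exists j ≠ i with p ∤ θ j
    have hex : ∃ j : Fin b, j ≠ i ∧ ¬ (p : ℤ) ∣ θ j := by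
      by_contra hcon
      push_neg at hcon
      -- then p divides θ j for all j
      have hall : ∀ j : Fin b, (p : ℤ) ∣ θ j := by
        intro j
        by_cases hj : j = i
        · subst hj
          have hdivsum : (p : ℤ) ∣ ∑ k, θ k :=
            dvd_trans (Int.natCast_dvd_natCast.mpr hpn) hsum
          have : (p : ℤ) ∣ ∑ k ∈ Finset.univ.erase j, θ k := by
            apply Finset.dvd_sum
            intro k hk
            exact hcon k (Finset.ne_of_mem_erase hk)
          have hsplit : (∑ k, θ k) = θ j + ∑ k ∈ Finset.univ.erase j, θ k := by
            rw [← Finset.add_sum_erase _ _ (Finset.mem_univ j)]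
          have := hdivsum
          rw [hsplit] at this
          exact (dvd_add_right ‹(p : ℤ) ∣ ∑ k ∈ Finset.univ.erase j, θ k›).mp
            (by rwa [add_comm] at this)
        · exact hcon j hj
      -- contradiction with hgcd
      have hpt : ∀ j : Fin b, p ∣ (θ j).gcd n := by
        intro j
        exact Int.natCast_dvd_natCast.mp
          (Int.dvd_coe_gcd (hall j) (Int.natCast_dvd_natCast.mpr hpn))
      have : p ∣ Finset.univ.gcd fun j => (θ j).gcd n :=
        Finset.dvd_gcd fun j _ => hpt j
      have : p ∣ 1 := hgcd ▸ Nat.dvd_gcd this hpn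
      exact hp'.ne_one (Nat.dvd_one.mp this)
    obtain ⟨j, hji, hpj⟩ := hex
    -- p ∤ gcd(θ j, n)
    have hpt : ¬ p ∣ (θ j).gcd n := by
      intro h
      exact hpj (dvd_trans (Int.natCast_dvd_natCast.mpr h) (Int.gcd_dvd_left _ _))
    -- p^k ∣ q_j
    have hq : p ^ k ∣ n / (θ j).gcd n := by
      have hmul : n / (θ j).gcd n * (θ j).gcd n = n := Nat.div_mul_cancel (htdvd j)
      have hcop : Nat.Coprime (p ^ k) ((θ j).gcd n) :=
        Nat.Coprime.pow_left _ ((hp'.coprime_iff_not_dvd).mpr hpt)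
      rw [← hmul] at hpk
      exact hcop.dvd_of_dvd_mul_right hpk
    exact dvd_trans hq (Finset.dvd_lcm (Finset.mem_erase.mpr ⟨hji, Finset.mem_univ j⟩))
  exact Nat.dvd_antisymm hLdvd hdvdL
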